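/- arXiv:2308.03752 — 2 statements merged into one kernel-verified Lean document; each statement's English description precedes it below -/
import Mathlib

section
/- For any Euclidean lattice L in ℝⁿ one has syst(L) ≤ 2·(covol(L)/νₙ)^(1/n), where syst(L) is the minimum Euclidean norm of a nonzero element of L and νₙ is the Lebesgue measure of the n-dimensional Euclidean unit ball. -/
/-!
Minkowski's convex body theorem: a centrally symmetric compact convex set of volume at least
`2ⁿ · covol(L)` contains a nonzero point of `L`. The closed ball of radius
`2 (covol(L) / νₙ)^(1/n)` has volume exactly `2ⁿ · covol(L)`, and `covol(L)` is the volume of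
the fundamental parallelepiped of the basis.
-/

open MeasureTheory Measure Metric Module

theorem sInf_norm_le_of_exists {E : Type*} [SeminormedAddCommGroup E] {S : Set E} {r : ℝ}
    (h : ∃ x ∈ S, x ≠ 0 ∧ ‖x‖ ≤ r) :
    sInf {s : ℝ | ∃ x ∈ S, x ≠ 0 ∧ ‖x‖ = s} ≤ r := by
  obtain ⟨x, hxS, hx0, hxr⟩ := h
  refine le_trans (csInf_le ⟨0, ?_⟩ ⟨x, hxS, hx0, rfl⟩) hxr
  rintro _ ⟨y, -, -, rfl⟩
  exact norm_nonneg y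

section

variable {E : Type*} [NormedAddCommGroup E] [NormedSpace ℝ E] [MeasurableSpace E] [BorelSpace E]
  [FiniteDimensional ℝ E] (μ : Measure E) [μ.IsAddHaarMeasure]

theorem addHaar_closedBall_mul_rpow_inv_finrank [Nontrivial E] (x : E) {r c : ℝ}
    (hr : 0 ≤ r) (hc : 0 ≤ c) :
    μ (closedBall x (r * (c / (μ (ball 0 1)).toReal) ^ ((1 : ℝ) / finrank ℝ E))) =
      ENNReal.ofReal (r ^ finrank ℝ E * c) := by
  have hν0 : μ (ball 0 1) ≠ 0 := (measure_ball_pos μ 0 one_pos).ne'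
  have hν : μ (ball 0 1) ≠ ⊤ := measure_ball_lt_top.ne
  have hd : (finrank ℝ E : ℝ) ≠ 0 := by exact_mod_cast finrank_pos.ne'
  have hroot : ((c / (μ (ball 0 1)).toReal) ^ ((1 : ℝ) / finrank ℝ E)) ^ finrank ℝ E =
      c / (μ (ball 0 1)).toReal := by
    rw [← Real.rpow_natCast, ← Real.rpow_mul (by positivity), one_div_mul_cancel hd, Real.rpow_one]
  rw [addHaar_closedBall μ x (by positivity), mul_pow, hroot, ← mul_div_assoc,
    ENNReal.ofReal_div_of_pos (ENNReal.toReal_pos hν0 hν), ENNReal.ofReal_toReal hν,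
    ENNReal.div_mul_cancel hν0 hν]

theorem exists_ne_zero_mem_span_norm_le_of_measure_mul_two_pow_le [Nontrivial E]
    {ι : Type*} [Fintype ι] (b : Basis ι ℝ E) {r : ℝ}
    (h : μ (ZSpan.fundamentalDomain b) * 2 ^ finrank ℝ E ≤ μ (closedBall 0 r)) :
    ∃ x ∈ Submodule.span ℤ (Set.range b), x ≠ 0 ∧ ‖x‖ ≤ r := by
  have : Countable (Submodule.span ℤ (Set.range b)).toAddSubgroup :=
    inferInstanceAs <| Countable (Submodule.span ℤ (Set.range b))
  obtain ⟨x, hx0, hx⟩ := exists_ne_zero_mem_lattice_of_measure_mul_two_pow_le_measure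
    (ZSpan.isAddFundamentalDomain' b μ) (fun y hy => by simpa using hy)
    (convex_closedBall 0 r) (isCompact_closedBall 0 r) h
  exact ⟨x, x.2, by simpa using hx0, by simpa using hx⟩

end

theorem ZSpan.volume_fundamentalDomain_euclideanSpace {ι : Type*} [Fintype ι] [DecidableEq ι]
    (b : Basis ι ℝ (EuclideanSpace ℝ ι)) :
    volume (ZSpan.fundamentalDomain b) = ENNReal.ofReal |(Matrix.of fun i j => b j i).det| := by
  have h := ZSpan.volume_fundamentalDomain (b.map (EuclideanSpace.equiv ι ℝ).toLinearEquiv)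
  rw [← ZSpan.map_fundamentalDomain, LinearEquiv.image_eq_preimage_symm] at h
  rw [← (PiLp.volume_preserving_toLp ι).measure_preimage
      (ZSpan.fundamentalDomain_measurableSet b).nullMeasurableSet, ← Matrix.det_transpose]
  exact h

/-- **Hermite–Minkowski bound.** For a Euclidean lattice `L = ℤx₁ ⊕ ⋯ ⊕ ℤxₙ ⊆ ℝⁿ`,
`syst(L) ≤ 2 (covol(L) / νₙ)^(1/n)`, where `syst(L)` is the minimal norm of a nonzero
lattice vector, `covol(L) = |det(x₁ | ⋯ | xₙ)|`, and `νₙ` is the volume of the unit ball. -/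
theorem stmt1 (n : ℕ) (b : Module.Basis (Fin n) ℝ (EuclideanSpace ℝ (Fin n))) :
    sInf {r : ℝ | ∃ x ∈ Submodule.span ℤ (Set.range ⇑b), x ≠ 0 ∧ ‖x‖ = r} ≤
      2 * (|(Matrix.of fun i j => b j i).det| /
        (volume (Metric.ball (0 : EuclideanSpace ℝ (Fin n)) 1)).toReal) ^ ((1 : ℝ) / n) := by
  rcases Nat.eq_zero_or_pos n with rfl | hn
  · -- In dimension zero the set is empty and `sInf ∅ = 0`.
    have hempty : {r : ℝ | ∃ x ∈ Submodule.span ℤ (Set.range b), x ≠ 0 ∧ ‖x‖ = r} = ∅ :=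
      Set.eq_empty_of_forall_notMem fun _ ⟨x, _, hx0, _⟩ => hx0 (Subsingleton.elim x 0)
    rw [hempty, Real.sInf_empty]
    positivity
  · have : Nontrivial (EuclideanSpace ℝ (Fin n)) := by
      have : Nonempty (Fin n) := Fin.pos_iff_nonempty.mp hn
      infer_instance
    apply sInf_norm_le_of_exists
    apply exists_ne_zero_mem_span_norm_le_of_measure_mul_two_pow_le volume b
    have hball := addHaar_closedBall_mul_rpow_inv_finrank volume (0 : EuclideanSpace ℝ (Fin n))
      zero_le_two (abs_nonneg (Matrix.of fun i j => b j i).det)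
    rw [finrank_euclideanSpace_fin] at hball
    rw [ZSpan.volume_fundamentalDomain_euclideanSpace, finrank_euclideanSpace_fin, hball,
      ENNReal.ofReal_mul (by positivity), ENNReal.ofReal_pow zero_le_two, ENNReal.ofReal_ofNat,
      mul_comm]
end

section
/- Let L be a Euclidean lattice in ℝⁿ, let v ∈ L be a nonzero vector of minimal Euclidean norm (so ‖v‖ = syst(L)), and let p : ℝⁿ → v^⊥ be the orthogonal projection onto the orthogonal complement of v. Then every nonzero element of the projected lattice p(L) has norm at least (√3/2)·syst(L); that is, for every x ∈ L with p(x) ≠ 0, ‖p(x)‖ ≥ (√3/2)·‖v‖. -/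
/-!
Reduce `x ∈ L` modulo `ℤ v` so that its component along `v` has length at most `‖v‖ / 2`; this
does not change the projection to `v^⊥`. The reduced vector is a nonzero lattice vector, so its
squared norm is at least `‖v‖²`, and Pythagoras leaves at least `(3/4)‖v‖²` for the component
in `v^⊥`.
-/

open scoped RealInnerProductSpace

section

variable {E : Type*} [NormedAddCommGroup E] [InnerProductSpace ℝ E]

theorem exists_int_norm_orthogonalProjectionOnto_span_sub_zsmul_le (v x : E) :
    ∃ k : ℤ, ‖(ℝ ∙ v).orthogonalProjectionOnto (x - k • v)‖ ≤ ‖v‖ / 2 := by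
  set t := ⟪v, x⟫ / ‖v‖ ^ 2
  refine ⟨round t, ?_⟩
  have hproj : (ℝ ∙ v).starProjection (x - round t • v) = (t - round t) • v := by
    rw [map_sub, map_zsmul, Submodule.starProjection_singleton,
      Submodule.starProjection_eq_self_iff.mpr (Submodule.mem_span_singleton_self v),
      sub_smul, Int.cast_smul_eq_zsmul]
    rfl
  change ‖((ℝ ∙ v).orthogonalProjectionOnto _ : E)‖ ≤ _
  rw [← Submodule.starProjection_apply, hproj, norm_smul, Real.norm_eq_abs]
  calc |t - round t| * ‖v‖ ≤ 1 / 2 * ‖v‖ := by gcongr; exact abs_sub_round t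
    _ = ‖v‖ / 2 := by ring

theorem sqrt_three_div_two_mul_norm_le_norm_orthogonalProjectionOnto {L : AddSubgroup E} {v : E}
    (hv : v ∈ L) (hmin : ∀ x ∈ L, x ≠ 0 → ‖v‖ ≤ ‖x‖) {x : E} (hx : x ∈ L)
    (hpx : (ℝ ∙ v)ᗮ.orthogonalProjectionOnto x ≠ 0) :
    √3 / 2 * ‖v‖ ≤ ‖(ℝ ∙ v)ᗮ.orthogonalProjectionOnto x‖ := by
  obtain ⟨k, hk⟩ := exists_int_norm_orthogonalProjectionOnto_span_sub_zsmul_le v x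
  set y := x - k • v
  have hy_proj : (ℝ ∙ v)ᗮ.orthogonalProjectionOnto y = (ℝ ∙ v)ᗮ.orthogonalProjectionOnto x := by
    rw [map_sub, map_zsmul, Submodule.orthogonalProjectionOnto_orthogonal_apply_eq_zero
      (Submodule.mem_span_singleton_self v), zsmul_zero, sub_zero]
  have hy0 : y ≠ 0 := fun h => hpx (by rw [← hy_proj, h, map_zero])
  have hvy : ‖v‖ ≤ ‖y‖ := hmin y (L.sub_mem hx (L.zsmul_mem hv k)) hy0
  have hpyth := Submodule.norm_sq_eq_add_norm_sq_projection y (ℝ ∙ v)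
  rw [hy_proj] at hpyth
  have hsq : (√3 / 2 * ‖v‖) ^ 2 ≤ ‖(ℝ ∙ v)ᗮ.orthogonalProjectionOnto x‖ ^ 2 := by
    rw [mul_pow, div_pow, Real.sq_sqrt zero_le_three]
    nlinarith [norm_nonneg ((ℝ ∙ v).orthogonalProjectionOnto y), norm_nonneg v]
  exact le_of_sq_le_sq hsq (norm_nonneg _)

end

theorem stmt19_general (n : ℕ) (b : Module.Basis (Fin n) ℝ (EuclideanSpace ℝ (Fin n)))
    (v : EuclideanSpace ℝ (Fin n)) (hv : v ∈ Submodule.span ℤ (Set.range ⇑b))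
    (hmin : ∀ x ∈ Submodule.span ℤ (Set.range ⇑b), x ≠ 0 → ‖v‖ ≤ ‖x‖) :
    ∀ x ∈ Submodule.span ℤ (Set.range ⇑b),
      Submodule.orthogonalProjectionOnto (ℝ ∙ v)ᗮ x ≠ 0 →
        Real.sqrt 3 / 2 * ‖v‖ ≤ ‖Submodule.orthogonalProjectionOnto (ℝ ∙ v)ᗮ x‖ :=
  fun _ hx hpx => sqrt_three_div_two_mul_norm_le_norm_orthogonalProjectionOnto
    (L := (Submodule.span ℤ (Set.range ⇑b)).toAddSubgroup) hv hmin hx hpx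

/-- **Projection of a lattice along a shortest vector.**
Let `L = ℤx₁ ⊕ ⋯ ⊕ ℤxₙ` be a Euclidean lattice in `ℝⁿ`, let `v ∈ L` be a nonzero vector
of minimal norm (`‖v‖ = syst(L)`), and let `p` be the orthogonal projection onto the
orthogonal complement `v^⊥` of `v`. Then every nonzero projection `p(x)` of a lattice
point `x ∈ L` satisfies `‖p(x)‖ ≥ (√3/2)·‖v‖`. -/
theorem stmt19 (n : ℕ) (b : Module.Basis (Fin n) ℝ (EuclideanSpace ℝ (Fin n)))
    (v : EuclideanSpace ℝ (Fin n)) (hv : v ∈ Submodule.span ℤ (Set.range ⇑b)) (hv0 : v ≠ 0)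
    (hmin : ∀ x ∈ Submodule.span ℤ (Set.range ⇑b), x ≠ 0 → ‖v‖ ≤ ‖x‖) :
    ∀ x ∈ Submodule.span ℤ (Set.range ⇑b),
      Submodule.orthogonalProjectionOnto (ℝ ∙ v)ᗮ x ≠ 0 →
        Real.sqrt 3 / 2 * ‖v‖ ≤ ‖Submodule.orthogonalProjectionOnto (ℝ ∙ v)ᗮ x‖ :=
  stmt19_general n b v hv hmin
end
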